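/- Let Φ: V → M be a holomorphic (or real-analytic/smooth) matrix-valued map on a neighborhood V of 0 in C^N, with block components Φ^{(α,β)}. Suppose Φ^{(α,α)} ≡ I, Φ^{(α,β)}(0) = 0 for α > β, and the derivative identity ∂Φ^{(α,β)}/∂z_μ = Φ^{(α,β+1)} · ∂Φ^{(β+1,β)}/∂z_μ holds for all 0 ≤ β < α ≤ n and 1 ≤ μ ≤ N. Then Φ^{(α,β)}(z) = O(|z|^{α−β}) as z → 0, for all 0 ≤ β ≤ α ≤ n. -/

import Mathlib

open Asymptotics Filter Metric Set Topology

/-!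
Induction on `α - β`. The block `Φ^{(α,β)}` vanishes at `0`, and by the derivative identity its
first derivatives are `Φ^{(α,β+1)}`, of order `α - β - 1` by induction, times first derivatives
of the holomorphic `Φ^{(β+1,β)}`, which the Cauchy estimates bound near `0`. The mean value
inequality then gains one order; the base case is boundedness near `0`, by continuity.
-/

theorem ContinuousLinearMap.norm_le_sum_norm_apply_single {𝕜 ι F : Type*} [RCLike 𝕜] [Fintype ι]
    [DecidableEq ι] [NormedAddCommGroup F] [NormedSpace 𝕜 F] (L : (ι → 𝕜) →L[𝕜] F) :
    ‖L‖ ≤ ∑ i, ‖L (Pi.single i 1)‖ := by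
  refine L.opNorm_le_bound (by positivity) fun v => ?_
  calc ‖L v‖ = ‖∑ i, v i • L (Pi.single i 1)‖ := by
        simp only [← map_smul, ← map_sum, ← Pi.single_smul', smul_eq_mul, mul_one,
          Finset.univ_sum_single]
    _ ≤ ∑ i, ‖v i‖ * ‖L (Pi.single i 1)‖ := (norm_sum_le _ _).trans_eq (by simp only [norm_smul])
    _ ≤ ∑ i, ‖v‖ * ‖L (Pi.single i 1)‖ := by
        gcongr with i; exact norm_le_pi_norm v i
    _ = (∑ i, ‖L (Pi.single i 1)‖) * ‖v‖ := by rw [← Finset.mul_sum, mul_comm]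

theorem Asymptotics.IsBigO.continuousLinearMap_of_apply_single {𝕜 ι F α : Type*} [RCLike 𝕜]
    [Fintype ι] [DecidableEq ι] [NormedAddCommGroup F] [NormedSpace 𝕜 F] {l : Filter α}
    {g : α → (ι → 𝕜) →L[𝕜] F} {u : α → ℝ}
    (h : ∀ i, (fun a => g a (Pi.single i 1)) =O[l] u) : g =O[l] u :=
  calc g =O[l] fun a => ∑ i, ‖g a (Pi.single i 1)‖ :=
        .of_bound' (.of_forall fun a => (g a).norm_le_sum_norm_apply_single.trans (le_abs_self _))
    _ =O[l] u := .fun_sum fun i _ => (h i).norm_left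

theorem DifferentiableOn.fderiv_isBigO_one {E F : Type*} [NormedAddCommGroup E] [NormedSpace ℂ E]
    [NormedAddCommGroup F] [NormedSpace ℂ F] {g : E → F} {s : Set E} {x : E}
    (hg : DifferentiableOn ℂ g s) (hs : s ∈ 𝓝 x) :
    fderiv ℂ g =O[𝓝 x] fun _ => (1 : ℝ) := by
  obtain ⟨δ, hδ, hδs, hδg⟩ : ∃ δ > 0, ball x δ ⊆ s ∧ ∀ y ∈ ball x δ, ‖g y - g x‖ < 1 := by
    obtain ⟨δ₁, hδ₁, hs'⟩ := Metric.mem_nhds_iff.mp hs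
    obtain ⟨δ₂, hδ₂, hg'⟩ :=
      Metric.continuousAt_iff.mp (hg.continuousOn.continuousAt hs) 1 one_pos
    exact ⟨min δ₁ δ₂, lt_min hδ₁ hδ₂, (ball_subset_ball (min_le_left _ _)).trans hs',
      fun y hy => by simpa [dist_eq_norm] using hg' (ball_subset_ball (min_le_right _ _) hy)⟩
  refine .of_bound (2 / (δ / 2)) ?_
  filter_upwards [ball_mem_nhds x (half_pos hδ)] with w hw
  have hsub : ball w (δ / 2) ⊆ ball x δ := by
    intro y hy
    rw [mem_ball] at hy hw ⊢
    linarith [dist_triangle y w x]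
  -- Cauchy estimate on the ball of radius δ/2 about w, where g stays within 2 of g w
  have hmaps : MapsTo g (ball w (δ / 2)) (closedBall (g w) 2) := fun y hy => by
    rw [mem_closedBall, dist_eq_norm]
    calc ‖g y - g w‖ ≤ ‖g y - g x‖ + ‖g x - g w‖ := norm_sub_le_norm_sub_add_norm_sub _ _ _
      _ = ‖g y - g x‖ + ‖g w - g x‖ := by rw [norm_sub_rev (g x)]
      _ ≤ 2 := by linarith [hδg y (hsub hy), hδg w (ball_subset_ball (by linarith) hw)]
  simpa using Complex.norm_fderiv_le_div_of_mapsTo_ball (hg.mono (hsub.trans hδs)) hmaps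
    (half_pos hδ)

theorem Asymptotics.isBigO_pow_succ_of_fderiv {𝕜 E F : Type*} [RCLike 𝕜] [NormedAddCommGroup E]
    [NormedSpace 𝕜 E] [NormedAddCommGroup F] [NormedSpace 𝕜 F] {f : E → F} {k : ℕ}
    (hf : ∀ᶠ x in 𝓝 0, DifferentiableAt 𝕜 f x) (h0 : f 0 = 0)
    (hf' : fderiv 𝕜 f =O[𝓝 0] fun x => ‖x‖ ^ k) :
    f =O[𝓝 0] fun x => ‖x‖ ^ (k + 1) := by
  let : NormedSpace ℝ E := NormedSpace.restrictScalars ℝ 𝕜 E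
  obtain ⟨C, hC, hCf'⟩ := hf'.exists_pos
  obtain ⟨ε, hε, hball⟩ := Metric.eventually_nhds_iff_ball.mp (hf.and hCf'.bound)
  refine .of_bound C ?_
  filter_upwards [ball_mem_nhds 0 hε] with z hz
  have hzε : closedBall (0 : E) ‖z‖ ⊆ ball 0 ε := closedBall_subset_ball (by simpa using hz)
  have hbound : ∀ w ∈ closedBall (0 : E) ‖z‖, ‖fderiv 𝕜 f w‖ ≤ C * ‖z‖ ^ k := fun w hw => by
    have hwz : ‖w‖ ≤ ‖z‖ := by simpa using hw
    calc ‖fderiv 𝕜 f w‖ ≤ C * ‖‖w‖ ^ k‖ := (hball w (hzε hw)).2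
      _ ≤ C * ‖z‖ ^ k := by rw [norm_pow, _root_.norm_norm]; gcongr
  have hmv := (convex_closedBall (0 : E) ‖z‖).norm_image_sub_le_of_norm_fderiv_le
    (fun w hw => (hball w (hzε hw)).1) hbound (mem_closedBall_self (norm_nonneg z))
    (mem_closedBall_zero_iff.mpr le_rfl)
  simpa [h0, pow_succ, mul_assoc] using hmv

theorem block_vanishing_order_general
    (N n m : ℕ) (V : Set (Fin N → ℂ)) (hV : IsOpen V) (h0 : (0 : Fin N → ℂ) ∈ V)
    (Φ : ℕ → ℕ → ((Fin N → ℂ) → Matrix (Fin m) (Fin m) ℂ))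
    (hdiff : ∀ α β, α ≤ n → β ≤ n → ∀ i j,
      DifferentiableOn ℂ (fun z => Φ α β z i j) V)
    (hzero : ∀ α β, β < α → α ≤ n → Φ α β 0 = 0)
    (hderiv : ∀ α β, β < α → α ≤ n → ∀ μ : Fin N, ∀ z ∈ V, ∀ i j,
      fderiv ℂ (fun w => Φ α β w i j) z (Pi.single μ 1) =
        ∑ l, Φ α (β + 1) z i l * fderiv ℂ (fun w => Φ (β + 1) β w l j) z (Pi.single μ 1)) :
    ∀ α β, β ≤ α → α ≤ n → ∀ i j,
      (fun z => Φ α β z i j) =O[nhds (0 : Fin N → ℂ)] (fun z => ‖z‖ ^ (α - β)) := by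
  have hVn : V ∈ 𝓝 0 := hV.mem_nhds h0
  have hpartial : ∀ α β, α ≤ n → β ≤ n → ∀ μ i j,
      (fun w => fderiv ℂ (fun x => Φ α β x i j) w (Pi.single μ 1)) =O[𝓝 0] fun _ => (1 : ℝ) :=
    fun α β hα hβ μ i j =>
      ((ContinuousLinearMap.apply ℂ ℂ (Pi.single μ 1)).isBigO_comp _ _).trans
        ((hdiff α β hα hβ i j).fderiv_isBigO_one hVn)
  suffices key : ∀ k β, β + k ≤ n → ∀ i j,
      (fun z => Φ (β + k) β z i j) =O[𝓝 0] fun z => ‖z‖ ^ k by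
    intro α β hβα hαn i j
    obtain ⟨k, rfl⟩ := Nat.exists_eq_add_of_le hβα
    simpa using key k β hαn i j
  intro k
  induction k with
  | zero =>
    intro β hβ i j
    simpa using ((hdiff β β hβ hβ i j).continuousOn.continuousAt hVn).tendsto.isBigO_one ℝ
  | succ k ih =>
    intro β hβk i j
    have hnext := ih (β + 1) (by omega)
    rw [Nat.add_right_comm] at hnext
    show (fun z => Φ (β + k + 1) β z i j) =O[𝓝 0] _
    refine isBigO_pow_succ_of_fderiv (𝕜 := ℂ) ?_ (by simp [hzero (β + k + 1) β (by omega) hβk]) ?_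
    · filter_upwards [hVn] with w hw
      exact (hdiff _ _ hβk (by omega) i j).differentiableAt (hV.mem_nhds hw)
    refine .continuousLinearMap_of_apply_single fun μ => ?_
    have hsum : (fun w => ∑ l, Φ (β + k + 1) (β + 1) w i l *
        fderiv ℂ (fun x => Φ (β + 1) β x l j) w (Pi.single μ 1)) =O[𝓝 0] fun w => ‖w‖ ^ k :=
      .fun_sum fun l _ => by simpa using (hnext i l).mul (hpartial _ _ (by omega) (by omega) μ l j)
    refine hsum.congr' ?_ .rfl
    filter_upwards [hVn] with w hw
    exact (hderiv _ _ (by omega) hβk μ w hw i j).symm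

/-- If the blocks of a holomorphic matrix-valued map `Φ` on a neighborhood `V` of `0`
in `ℂ^N` satisfy `Φ^{(α,α)} ≡ I`, `Φ^{(α,β)}(0) = 0` for `α > β`, and the Griffiths
transversality derivative identity
`∂Φ^{(α,β)}/∂z_μ = Φ^{(α,β+1)} · ∂Φ^{(β+1,β)}/∂z_μ`,
then `Φ^{(α,β)}(z) = O(|z|^{α−β})` as `z → 0`, for all `0 ≤ β ≤ α ≤ n`. -/
theorem block_vanishing_order
    (N n m : ℕ) (V : Set (Fin N → ℂ)) (hV : IsOpen V) (h0 : (0 : Fin N → ℂ) ∈ V)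
    (Φ : ℕ → ℕ → ((Fin N → ℂ) → Matrix (Fin m) (Fin m) ℂ))
    (hdiff : ∀ α β, α ≤ n → β ≤ n → ∀ i j,
      DifferentiableOn ℂ (fun z => Φ α β z i j) V)
    (hdiag : ∀ α, α ≤ n → ∀ z ∈ V, Φ α α z = 1)
    (hzero : ∀ α β, β < α → α ≤ n → Φ α β 0 = 0)
    (hderiv : ∀ α β, β < α → α ≤ n → ∀ μ : Fin N, ∀ z ∈ V, ∀ i j,
      fderiv ℂ (fun w => Φ α β w i j) z (Pi.single μ 1) =
        ∑ l, Φ α (β + 1) z i l * fderiv ℂ (fun w => Φ (β + 1) β w l j) z (Pi.single μ 1)) :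
    ∀ α β, β ≤ α → α ≤ n → ∀ i j,
      (fun z => Φ α β z i j) =O[nhds (0 : Fin N → ℂ)] (fun z => ‖z‖ ^ (α - β)) :=
  block_vanishing_order_general N n m V hV h0 Φ hdiff hzero hderiv
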